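/- Let ρ00, ρ11 > 0 with ρ00 + ρ11 = 1, g ∈ (0,1), and 0 < c < √(ρ00·ρ11). With Δ = √((ρ11 − ρ00)² + 4c²), F = ρ00 + g·ρ11, and Δ' = √((ρ00 − g·ρ11)² + 4g·c²), the strict inequality arctanh(Δ)/Δ > g·arctanh(Δ'/F)/Δ' holds. -/
import Mathlib

/-- The integral representation of the reciprocal logarithmic mean. -/
lemma logMean_integral {x y : ℝ} (hx : 0 < x) (hxy : x < y) :
    ∫ s in (0:ℝ)..1, ((y - x) * s + x)⁻¹ = (Real.log y - Real.log x) / (y - x) := by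
  have hne : y - x ≠ 0 := sub_ne_zero.2 hxy.ne'
  have h := intervalIntegral.integral_comp_mul_add (f := fun u => u⁻¹) (a := 0) (b := 1) hne x
  simp only [mul_zero, zero_add, mul_one] at h
  rw [h, sub_add_cancel, integral_inv (by
        intro h0
        rcases Set.mem_uIcc.1 h0 with ⟨h1, _⟩ | ⟨_, h2⟩
        · linarith
        · linarith), Real.log_div (by linarith) (by linarith)]
  rw [smul_eq_mul, div_eq_inv_mul]

/-- Strict antitonicity of the reciprocal logarithmic mean. -/
lemma logMean_anti {x₁ y₁ x₂ y₂ : ℝ} (hx₁ : 0 < x₁) (h₁ : x₁ < y₁) (h₂ : x₂ < y₂)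
    (hx : x₁ < x₂) (hy : y₁ ≤ y₂) :
    (Real.log y₂ - Real.log x₂) / (y₂ - x₂) < (Real.log y₁ - Real.log x₁) / (y₁ - x₁) := by
  have hx₂ : 0 < x₂ := hx₁.trans hx
  rw [← logMean_integral hx₁ h₁, ← logMean_integral hx₂ h₂]
  have hpos : ∀ (x y : ℝ), 0 < x → x < y → ∀ s ∈ Set.Icc (0:ℝ) 1, 0 < (y - x) * s + x := by
    intro x y hx hxy s hs
    nlinarith [hs.1, hs.2]
  have hcont : ∀ (x y : ℝ), 0 < x → x < y →
      ContinuousOn (fun s => ((y - x) * s + x)⁻¹) (Set.Icc (0:ℝ) 1) := by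
    intro x y hx hxy
    exact ((continuous_const.mul continuous_id).add continuous_const).continuousOn.inv₀
      fun s hs => (hpos x y hx hxy s hs).ne'
  refine intervalIntegral.integral_lt_integral_of_continuousOn_of_le_of_exists_lt one_pos
    (hcont x₂ y₂ hx₂ h₂) (hcont x₁ y₁ hx₁ h₁) ?_ ?_
  · intro s hs
    have hs0 : (0:ℝ) ≤ s := hs.1.le
    have hs1 : s ≤ 1 := hs.2
    have hp1 : 0 < (y₁ - x₁) * s + x₁ := hpos x₁ y₁ hx₁ h₁ s ⟨hs0, hs1⟩
    have hp2 : 0 < (y₂ - x₂) * s + x₂ := hpos x₂ y₂ hx₂ h₂ s ⟨hs0, hs1⟩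
    have hle : (y₁ - x₁) * s + x₁ ≤ (y₂ - x₂) * s + x₂ := by nlinarith
    exact inv_anti₀ hp1 hle
  · refine ⟨0, Set.left_mem_Icc.2 zero_le_one, ?_⟩
    simp only [mul_zero, zero_add]
    exact inv_strictAnti₀ hx₁ hx

/-- Inverse hyperbolic tangent: `arctanh x = (1/2) ln((1+x)/(1−x))` for `|x| < 1`. -/
noncomputable def arctanh (x : ℝ) : ℝ := (1 / 2) * Real.log ((1 + x) / (1 - x))

set_option maxHeartbeats 1600000 in
/-- for `ρ00, ρ11 > 0` with `ρ00 + ρ11 = 1`, `g ∈ (0,1)`, and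
`0 < c < √(ρ00 ρ11)`, with `Δ = √((ρ11 − ρ00)² + 4c²)`, `F = ρ00 + g ρ11`, and
`Δ' = √((ρ00 − g ρ11)² + 4 g c²)`, one has
`arctanh(Δ)/Δ > g · arctanh(Δ'/F)/Δ'`. -/
theorem arctanh_ratio_strict_ineq (ρ00 ρ11 g c : ℝ)
    (h00 : 0 < ρ00) (h11 : 0 < ρ11) (hsum : ρ00 + ρ11 = 1)
    (hg0 : 0 < g) (hg1 : g < 1)
    (hc0 : 0 < c) (hc : c < Real.sqrt (ρ00 * ρ11)) :
    g * arctanh (Real.sqrt ((ρ00 - g * ρ11) ^ 2 + 4 * g * c ^ 2) / (ρ00 + g * ρ11)) /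
        Real.sqrt ((ρ00 - g * ρ11) ^ 2 + 4 * g * c ^ 2)
      < arctanh (Real.sqrt ((ρ11 - ρ00) ^ 2 + 4 * c ^ 2)) /
          Real.sqrt ((ρ11 - ρ00) ^ 2 + 4 * c ^ 2) := by
  have hc2 : c ^ 2 < ρ00 * ρ11 := by
    have h1 : Real.sqrt (ρ00 * ρ11) ^ 2 = ρ00 * ρ11 :=
      Real.sq_sqrt (mul_pos h00 h11).le
    nlinarith [hc, hc0]
  set D : ℝ := (ρ11 - ρ00) ^ 2 + 4 * c ^ 2 with hD
  set Δ : ℝ := Real.sqrt D with hΔ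
  have hDpos : 0 < D := by positivity
  have hΔpos : 0 < Δ := Real.sqrt_pos.2 hDpos
  have hΔsq : Δ ^ 2 = D := Real.sq_sqrt hDpos.le
  have hΔlt1 : Δ < 1 := by
    rw [hΔ, show (1:ℝ) = Real.sqrt 1 by simp]
    exact Real.sqrt_lt_sqrt hDpos.le (by nlinarith)
  have hΔgt : ρ11 - ρ00 < Δ := by nlinarith
  have hΔgt' : ρ00 - ρ11 < Δ := by nlinarith
  set F : ℝ := ρ00 + g * ρ11 with hF
  have hFpos : 0 < F := by positivity
  have hFg : g < F := by nlinarith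
  set D' : ℝ := (ρ00 - g * ρ11) ^ 2 + 4 * g * c ^ 2 with hD'
  set Δ' : ℝ := Real.sqrt D' with hΔ'
  have hD'pos : 0 < D' := by positivity
  have hΔ'pos : 0 < Δ' := Real.sqrt_pos.2 hD'pos
  have hΔ'sq : Δ' ^ 2 = D' := Real.sq_sqrt hD'pos.le
  have hΔ'ltF : Δ' < F := by
    rw [hΔ']
    rw [show F = Real.sqrt (F ^ 2) by rw [Real.sqrt_sq hFpos.le]]
    exact Real.sqrt_lt_sqrt hD'pos.le (by nlinarith)
  have hΔsq' : Δ ^ 2 = (ρ11 - ρ00) ^ 2 + 4 * c ^ 2 := by rw [hΔsq, hD]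
  -- key fact 1 : g * (1 - Δ) < F - Δ'
  have hid1 : (F - g + g * Δ) ^ 2 - D' = g * (1 - g) * (1 - Δ) * (Δ - ρ00 + ρ11) := by
    rw [hF, hD']
    linear_combination g * hΔsq' + (g * Δ - g ^ 2 + g ^ 2 * Δ + ρ11 * g + ρ00 * g) * hsum
  have hid2 : D' - (g - F + g * Δ) ^ 2 = g * (1 - g) * (4 * c ^ 2 + 2 * ρ00 * (Δ - ρ11 + ρ00)) := by
    rw [hF, hD']
    linear_combination (-(g ^ 2)) * hΔsq' +
      (g ^ 2 + 2 * g ^ 2 * Δ - ρ11 * g ^ 2 - 2 * ρ00 * g + ρ00 * g ^ 2) * hsum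
  have k1 : g * (1 - Δ) < F - Δ' := by
    have hq : 0 < g * (1 - g) * (1 - Δ) * (Δ - ρ00 + ρ11) :=
      mul_pos (mul_pos (mul_pos hg0 (by linarith)) (by linarith)) (by linarith)
    have h1 : Δ' < F - g + g * Δ := by
      rw [hΔ']
      rw [show F - g + g * Δ = Real.sqrt ((F - g + g * Δ) ^ 2) by
        rw [Real.sqrt_sq (by nlinarith)]]
      exact Real.sqrt_lt_sqrt hD'pos.le (by linarith)
    linarith
  -- key fact 2 : g * (1 + Δ) ≤ F + Δ'
  have k2 : g * (1 + Δ) ≤ F + Δ' := by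
    rcases le_or_gt (g - F + g * Δ) 0 with h | h
    · linarith
    · have hq : 0 ≤ g * (1 - g) * (4 * c ^ 2 + 2 * ρ00 * (Δ - ρ11 + ρ00)) := by
        have hb : 0 < Δ - ρ11 + ρ00 := by linarith
        have := mul_pos h00 hb
        have hc2' : 0 < c ^ 2 := by positivity
        apply mul_nonneg (mul_nonneg hg0.le (by linarith)) (by linarith)
      have h2 : g - F + g * Δ ≤ Δ' := by
        rw [hΔ']
        rw [show g - F + g * Δ = Real.sqrt ((g - F + g * Δ) ^ 2) by
          rw [Real.sqrt_sq h.le]]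
        exact Real.sqrt_le_sqrt (by linarith)
      linarith
  clear_value D Δ F D' Δ'
  -- set up the four points
  set a₁ : ℝ := (1 - Δ) / 2 with ha₁
  set b₁ : ℝ := (1 + Δ) / 2 with hb₁
  set a₂ : ℝ := (F - Δ') / (2 * g) with ha₂
  set b₂ : ℝ := (F + Δ') / (2 * g) with hb₂
  clear_value a₁ b₁ a₂ b₂
  have ha₁pos : 0 < a₁ := by rw [ha₁]; linarith
  have h₁ : a₁ < b₁ := by rw [ha₁, hb₁]; linarith
  have h2g : (0:ℝ) < 2 * g := by positivity
  have h₂ : a₂ < b₂ := by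
    rw [ha₂, hb₂]
    exact (div_lt_div_iff_of_pos_right h2g).2 (by linarith)
  have hx : a₁ < a₂ := by
    rw [ha₁, ha₂, div_lt_div_iff₀ (by norm_num) h2g]
    linarith [k1]
  have hy : b₁ ≤ b₂ := by
    rw [hb₁, hb₂, div_le_div_iff₀ (by norm_num) h2g]
    linarith [k2]
  have hmain := logMean_anti ha₁pos h₁ h₂ hx hy
  have ha₁ne : a₁ ≠ 0 := ha₁pos.ne'
  have hb₁ne : b₁ ≠ 0 := by rw [hb₁]; positivity
  have hFΔ' : (0:ℝ) < F - Δ' := sub_pos.2 hΔ'ltF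
  have e1 : arctanh Δ = (1/2) * (Real.log b₁ - Real.log a₁) := by
    rw [arctanh, show (1 + Δ)/(1 - Δ) = b₁ / a₁ by
      rw [hb₁, ha₁]; field_simp]
    rw [Real.log_div hb₁ne ha₁ne]
  have e2 : arctanh (Δ'/F) = (1/2) * (Real.log b₂ - Real.log a₂) := by
    rw [arctanh, show (1 + Δ'/F)/(1 - Δ'/F) = b₂ / a₂ by
      rw [hb₂, ha₂, div_div_div_cancel_right₀ (show (2:ℝ) * g ≠ 0 by positivity)]
      rw [show (1:ℝ) + Δ'/F = (F + Δ')/F by field_simp,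
        show (1:ℝ) - Δ'/F = (F - Δ')/F by field_simp,
        div_div_div_cancel_right₀ hFpos.ne']]
    rw [Real.log_div (by rw [hb₂]; exact (div_pos (by linarith) h2g).ne') (by rw [ha₂]; exact (div_pos hFΔ' h2g).ne')]
  have eb1 : b₁ - a₁ = Δ := by rw [hb₁, ha₁]; ring
  have eb2 : b₂ - a₂ = Δ' / g := by rw [hb₂, ha₂]; field_simp; ring
  rw [eb1, eb2, div_div_eq_mul_div] at hmain
  rw [e1, e2]
  calc g * ((1/2) * (Real.log b₂ - Real.log a₂)) / Δ'
      = (1/2) * ((Real.log b₂ - Real.log a₂) * g / Δ') := by ring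
    _ < (1/2) * ((Real.log b₁ - Real.log a₁) / Δ) := by linarith
    _ = (1/2) * (Real.log b₁ - Real.log a₁) / Δ := by ring
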